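/- arXiv:1203.2040 — 4 statements merged into one kernel-verified Lean document; each statement's English description precedes it below -/
import Mathlib

section
/- Let Γ ⊂ P^n_K be a reduced non-degenerate finite set of points and let d(Γ)_a denote its higher minimum distances. If d(Γ)_b ≥ 2 for some integer b ≥ 2, then for all integers a with 1 ≤ a ≤ b−1 one has d(Γ)_a ≥ d(Γ)_{a+1} + 1. -/
open MvPolynomial

noncomputable section

namespace PointsMinDist

variable {K : Type} [Field K]

/-- The (homogeneous) vanishing ideal of a set of points of projective space:
all polynomials vanishing at every representative vector of every point. -/
def vanishingIdeal {m : ℕ} (Γ : Set (Projectivization K (Fin m → K))) :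
    Ideal (MvPolynomial (Fin m) K) where
  carrier := {f | ∀ P ∈ Γ, ∀ (v : Fin m → K) (hv : v ≠ 0),
      Projectivization.mk K v hv = P → MvPolynomial.eval v f = 0}
  zero_mem' := by intro P hP v hv h; simp
  add_mem' := by
    intro f g hf hg P hP v hv h
    simp [hf P hP v hv h, hg P hP v hv h]
  smul_mem' := by
    intro c f hf P hP v hv h
    simp [smul_eq_mul, hf P hP v hv h]

/-- The degree-`d` graded component of a (homogeneous) ideal, as a `K`-subspace. -/
def degPart {m : ℕ} (I : Ideal (MvPolynomial (Fin m) K)) (d : ℕ) :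
    Submodule K (MvPolynomial (Fin m) K) :=
  Submodule.restrictScalars K I ⊓ homogeneousSubmodule (Fin m) K d

/-- `K`-dimension of the degree-`d` component of an ideal. -/
def hdim {m : ℕ} (I : Ideal (MvPolynomial (Fin m) K)) (d : ℕ) : ℕ :=
  Module.finrank K (degPart I d)

/-- Hilbert function of `R/I` in degree `d`. -/
def HF {m : ℕ} (I : Ideal (MvPolynomial (Fin m) K)) (d : ℕ) : ℕ :=
  Module.finrank K (homogeneousSubmodule (Fin m) K d) - hdim I d

open Classical in
/-- `hyp Γ`: the maximum number of points of `Γ` contained in a hyperplane. -/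
def hyp {m : ℕ} (Γ : Finset (Projectivization K (Fin m → K))) : ℕ :=
  sSup {k | ∃ φ : Module.Dual K (Fin m → K), φ ≠ 0 ∧
    k = (Γ.filter fun P => φ P.rep = 0).card}

/-- the minimum distance `d(Γ) = |Γ| - hyp(Γ)`. -/
def minDist {m : ℕ} (Γ : Finset (Projectivization K (Fin m → K))) : ℕ :=
  Γ.card - hyp Γ

/-- `Γ` is non-degenerate: it is not contained in any hyperplane. -/
def Nondeg {m : ℕ} (Γ : Finset (Projectivization K (Fin m → K))) : Prop :=
  ∀ φ : Module.Dual K (Fin m → K), (∀ P ∈ Γ, φ P.rep = 0) → φ = 0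

/-- The higher minimum distance `d(Γ)ₐ = |Γ| - max{|Γ'| : Γ' ⊆ Γ, dim I(Γ')ₐ > dim I(Γ)ₐ}`. -/
def higherD {m : ℕ} (Γ : Finset (Projectivization K (Fin m → K))) (a : ℕ) : ℕ :=
  Γ.card - sSup {k | ∃ Γ' ⊆ Γ,
    hdim (vanishingIdeal (Γ' : Set (Projectivization K (Fin m → K)))) a >
      hdim (vanishingIdeal (Γ : Set (Projectivization K (Fin m → K)))) a ∧ k = Γ'.card}

open Classical in
/-- The degree `δ(P)` of a point `P` in `Γ`: the least degree in which the ideal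
of `Γ \ {P}` is strictly bigger than the ideal of `Γ`. -/
def pointDegree {m : ℕ} (Γ : Finset (Projectivization K (Fin m → K)))
    (P : Projectivization K (Fin m → K)) : ℕ :=
  sInf {d | hdim (vanishingIdeal ((Γ.erase P) : Set (Projectivization K (Fin m → K)))) d >
    hdim (vanishingIdeal (Γ : Set (Projectivization K (Fin m → K)))) d}

/-- A graded minimal free resolution
`0 → F_len → ⋯ → F_1 → R → R/I → 0` of `R/I`, `R = K[x_0,…,x_{N-1}]`.
`F_j = ⊕_{i : Fin (rk j)} R(-(twist j i))` for `1 ≤ j ≤ len`.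
The differential `F_1 → R` is given by `gen` (so that its image is `I`) and the
differential `F_{j+2} → F_{j+1}` is given (in matrix form, rows indexed by the
target) by `mat j`.  All entries are homogeneous of the appropriate degrees, and
minimality means all entries lie in the irrelevant maximal ideal
(zero constant coefficient). -/
structure MinFreeRes (N : ℕ) (K : Type) [Field K] (I : Ideal (MvPolynomial (Fin N) K)) where
  len : ℕ
  rk : ℕ → ℕ
  twist : (j : ℕ) → Fin (rk j) → ℕ
  gen : Fin (rk 1) → MvPolynomial (Fin N) K
  mat : (j : ℕ) → Matrix (Fin (rk (j + 1))) (Fin (rk (j + 2))) (MvPolynomial (Fin N) K)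
  rk_len_pos : 0 < rk len
  rk_eq_zero : ∀ j, len < j → rk j = 0
  gen_hom : ∀ i, (gen i).IsHomogeneous (twist 1 i)
  gen_min : ∀ i, constantCoeff (gen i) = 0
  gen_span : Ideal.span (Set.range gen) = I
  mat_hom : ∀ j i i', mat j i i' = 0 ∨
    ∃ d, (mat j i i').IsHomogeneous d ∧ d + twist (j + 1) i = twist (j + 2) i'
  mat_min : ∀ j i i', constantCoeff (mat j i i') = 0
  exact_one : ∀ v : Fin (rk 1) → MvPolynomial (Fin N) K,
    (∑ i, v i * gen i = 0) ↔ v ∈ LinearMap.range (mat 0).mulVecLin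
  exact_rest : ∀ j, LinearMap.ker (mat j).mulVecLin = LinearMap.range (mat (j + 1)).mulVecLin

/-- `a(Γ)`: the minimal twist `min_i {a_i}` occurring in the last module
`F_len = ⊕ R(-a_i)` of the minimal free resolution. -/
def MinFreeRes.aMin {N : ℕ} {K : Type} [Field K] {I : Ideal (MvPolynomial (Fin N) K)}
    (res : MinFreeRes N K I) : ℕ :=
  Finset.univ.inf'
    (Finset.univ_nonempty_iff.mpr (Fin.pos_iff_nonempty.mp res.rk_len_pos))
    (fun i => res.twist res.len i)

/-- The minimum socle degree `A_n = min_i {a_i - n}` (here `n = len`, the length of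
the resolution). -/
def MinFreeRes.A {N : ℕ} {K : Type} [Field K] {I : Ideal (MvPolynomial (Fin N) K)}
    (res : MinFreeRes N K I) : ℤ :=
  (res.aMin : ℤ) - res.len


-- ### auxiliary lemmas

variable {m : ℕ}

lemma vanishingIdeal_anti {Γ Δ : Set (Projectivization K (Fin m → K))} (h : Γ ⊆ Δ) :
    vanishingIdeal Δ ≤ vanishingIdeal Γ := fun _ hf P hP => hf P (h hP)

lemma eval_rep_eq_zero {Γ : Set (Projectivization K (Fin m → K))}
    {f : MvPolynomial (Fin m) K} (hf : f ∈ vanishingIdeal Γ)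
    {P : Projectivization K (Fin m → K)} (hP : P ∈ Γ) :
    eval P.rep f = 0 := hf P hP P.rep P.rep_nonzero P.mk_rep

lemma eval_smul_of_isHomogeneous {f : MvPolynomial (Fin m) K} {d : ℕ} (hf : f.IsHomogeneous d)
    (c : K) (v : Fin m → K) : eval (c • v) f = c ^ d * eval v f := by
  rw [eval_eq', eval_eq', Finset.mul_sum]
  apply Finset.sum_congr rfl
  intro s hs
  have hd : ∑ i, s i = d := by
    have h := hf (mem_support_iff.mp hs)
    rw [Finsupp.weight_apply, Finsupp.sum] at h
    rw [← h, Finset.sum_subset (Finset.subset_univ s.support)]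
    · simp
    · intro x _ hx
      simpa using Finsupp.notMem_support_iff.mp hx
  have he : ∀ i : Fin m, (c • v) i ^ s i = c ^ s i * v i ^ s i := by
    intro i; simp [mul_pow]
  simp_rw [he]
  rw [Finset.prod_mul_distrib, Finset.prod_pow_eq_pow_sum, hd]
  ring

lemma mem_vanishingIdeal_iff_of_isHomogeneous {Γ : Set (Projectivization K (Fin m → K))}
    {f : MvPolynomial (Fin m) K} {d : ℕ} (hf : f.IsHomogeneous d) :
    f ∈ vanishingIdeal Γ ↔ ∀ P ∈ Γ, eval P.rep f = 0 := by
  constructor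
  · exact fun h P hP => eval_rep_eq_zero h hP
  · intro h P hP v hv hmk
    obtain ⟨c, hc⟩ := Projectivization.exists_smul_eq_mk_rep K v hv
    rw [hmk] at hc
    have h2 : eval ((c : K) • v) f = 0 := by
      rw [Units.smul_def] at hc
      rw [hc]; exact h P hP
    rw [eval_smul_of_isHomogeneous hf] at h2
    rcases mul_eq_zero.mp h2 with h3 | h3
    · exact absurd h3 (pow_ne_zero _ c.ne_zero)
    · exact h3

instance fd_homogeneousSubmodule (d : ℕ) :
    FiniteDimensional K (homogeneousSubmodule (Fin m) K d) := by
  apply Submodule.finiteDimensional_of_le (S₂ := restrictTotalDegree (Fin m) K d)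
  intro f hf
  rw [mem_restrictTotalDegree]
  exact ((mem_homogeneousSubmodule _ _).mp hf).totalDegree_le

instance fd_degPart (I : Ideal (MvPolynomial (Fin m) K)) (d : ℕ) :
    FiniteDimensional K (degPart I d) :=
  Submodule.finiteDimensional_of_le (inf_le_right : degPart I d ≤ _)

lemma hdim_lt {I J : Ideal (MvPolynomial (Fin m) K)} (hIJ : I ≤ J) {d : ℕ}
    {f : MvPolynomial (Fin m) K} (hfJ : f ∈ J) (hfh : f.IsHomogeneous d) (hfI : f ∉ I) :
    hdim I d < hdim J d := by
  apply Submodule.finrank_lt_finrank_of_lt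
  apply lt_of_le_of_ne
  · exact inf_le_inf_right _ (by exact fun x hx => hIJ hx)
  · intro heq
    have : f ∈ degPart I d := by
      rw [heq]
      exact ⟨hfJ, (mem_homogeneousSubmodule _ _).mpr hfh⟩
    exact hfI this.1

lemma exists_dual_sep {P Q : Projectivization K (Fin m → K)} (h : P ≠ Q) :
    ∃ φ : Module.Dual K (Fin m → K), φ P.rep = 0 ∧ φ Q.rep ≠ 0 := by
  have hQ : Q.rep ∉ Submodule.span K {P.rep} := by
    intro hmem
    obtain ⟨c, hc⟩ := Submodule.mem_span_singleton.mp hmem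
    apply h
    rw [← Projectivization.mk_rep P, ← Projectivization.mk_rep Q]
    exact ((Projectivization.mk_eq_mk_iff' K _ _ Q.rep_nonzero P.rep_nonzero).mpr ⟨c, hc⟩).symm
  obtain ⟨φ, hφQ, hmap⟩ := Submodule.exists_dual_map_eq_bot_of_notMem hQ inferInstance
  refine ⟨φ, ?_, hφQ⟩
  have := Submodule.mem_map_of_mem (f := φ) (Submodule.mem_span_singleton_self P.rep)
  rw [hmap] at this
  simpa using this

def linPoly (φ : Module.Dual K (Fin m → K)) : MvPolynomial (Fin m) K :=
  ∑ i, C (φ (Pi.single i 1)) * X i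

lemma eval_linPoly (φ : Module.Dual K (Fin m → K)) (v : Fin m → K) :
    eval v (linPoly φ) = φ v := by
  rw [LinearMap.pi_apply_eq_sum_univ φ v, linPoly, map_sum]
  apply Finset.sum_congr rfl
  intro i _
  rw [map_mul, eval_C, eval_X, smul_eq_mul]
  have h1 : (Pi.single i 1 : Fin m → K) = fun j => if i = j then 1 else 0 := by
    ext j; simp [Pi.single_apply, eq_comm]
  rw [h1, mul_comm]

lemma linPoly_isHomogeneous (φ : Module.Dual K (Fin m → K)) :
    (linPoly φ).IsHomogeneous 1 := by
  apply IsHomogeneous.sum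
  intro i _
  simpa using (isHomogeneous_C (Fin m) (φ (Pi.single i 1))).mul (isHomogeneous_X K i)

-- the sup set
lemma bddAbove_S (Γ : Finset (Projectivization K (Fin m → K))) (a : ℕ) :
    BddAbove {k | ∃ Γ' ⊆ Γ,
      hdim (vanishingIdeal (Γ' : Set (Projectivization K (Fin m → K)))) a >
        hdim (vanishingIdeal (Γ : Set (Projectivization K (Fin m → K)))) a ∧ k = Γ'.card} := by
  refine ⟨Γ.card, fun k hk => ?_⟩
  obtain ⟨Γ', hsub, _, rfl⟩ := hk
  exact Finset.card_le_card hsub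

lemma nondeg_nonempty {Γ : Finset (Projectivization K (Fin (m + 1) → K))} (hnd : Nondeg Γ) :
    Γ.Nonempty := by
  by_contra hne
  rw [Finset.not_nonempty_iff_eq_empty] at hne
  have := hnd (LinearMap.proj 0) (by simp [hne])
  have h2 := LinearMap.congr_fun this (Pi.single 0 1)
  simp at h2

lemma zero_mem_S {Γ : Finset (Projectivization K (Fin (m + 1) → K))} (hΓ : Γ.Nonempty)
    {a : ℕ} (ha : 1 ≤ a) :
    0 ∈ {k | ∃ Γ' ⊆ Γ,
      hdim (vanishingIdeal (Γ' : Set (Projectivization K (Fin (m + 1) → K)))) a >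
        hdim (vanishingIdeal (Γ : Set (Projectivization K (Fin (m + 1) → K)))) a ∧ k = Γ'.card} := by
  obtain ⟨P, hP⟩ := hΓ
  obtain ⟨i, hi⟩ : ∃ i, P.rep i ≠ 0 := Function.ne_iff.mp P.rep_nonzero
  refine ⟨∅, Finset.empty_subset _, ?_, by simp⟩
  have hfh : (X i ^ a : MvPolynomial (Fin (m + 1)) K).IsHomogeneous a := by
    simpa using (isHomogeneous_X K i).pow a
  apply hdim_lt (vanishingIdeal_anti (by simp)) (d := a) (f := X i ^ a)
  · intro Q hQ; simp at hQ
  · exact hfh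
  · intro hmem
    have := eval_rep_eq_zero hmem (Finset.mem_coe.mpr hP)
    rw [map_pow, eval_X] at this
    exact hi ((pow_eq_zero_iff (by omega : a ≠ 0)).mp this)

section Key

variable {n : ℕ} (Γ : Finset (Projectivization K (Fin (n + 1) → K)))

lemma key (hnd : Nondeg Γ) {a : ℕ} (ha : 1 ≤ a)
    (hd : 2 ≤ higherD Γ (a + 1)) : higherD Γ (a + 1) + 1 ≤ higherD Γ a := by
  classical
  set S : ℕ → Set ℕ := fun c => {k | ∃ Γ' ⊆ Γ,
    hdim (vanishingIdeal (Γ' : Set (Projectivization K (Fin (n + 1) → K)))) c >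
      hdim (vanishingIdeal (Γ : Set (Projectivization K (Fin (n + 1) → K)))) c ∧ k = Γ'.card}
    with hS
  have hΓ : Γ.Nonempty := nondeg_nonempty hnd
  have hbdd : ∀ c, BddAbove (S c) := fun c => bddAbove_S Γ c
  have hne : ∀ c, 1 ≤ c → (S c).Nonempty := fun c hc => ⟨0, zero_mem_S hΓ hc⟩
  have hDef : ∀ c, higherD Γ c = Γ.card - sSup (S c) := fun c => rfl
  -- the sSup is attained
  have hmem : sSup (S a) ∈ S a := Nat.sSup_mem (hne a ha) (hbdd a)
  obtain ⟨Γ', hsub, hlt, hcard⟩ := hmem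
  -- find a homogeneous degree-a form vanishing on Γ' but not all of Γ
  have hle : vanishingIdeal (Γ : Set (Projectivization K (Fin (n + 1) → K))) ≤
      vanishingIdeal (Γ' : Set (Projectivization K (Fin (n + 1) → K))) :=
    vanishingIdeal_anti (by exact_mod_cast hsub)
  have hnotle : ¬ (degPart (vanishingIdeal (Γ' : Set (Projectivization K (Fin (n + 1) → K)))) a ≤
      degPart (vanishingIdeal (Γ : Set (Projectivization K (Fin (n + 1) → K)))) a) := by
    intro hcon
    exact absurd hlt (not_lt.mpr (Submodule.finrank_mono hcon))
  obtain ⟨f, hfΓ', hfΓ⟩ := SetLike.not_le_iff_exists.mp hnotle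
  have hfh : f.IsHomogeneous a := (mem_homogeneousSubmodule _ _).mp hfΓ'.2
  have hfnot : f ∉ vanishingIdeal (Γ : Set (Projectivization K (Fin (n + 1) → K))) := by
    intro hm
    exact hfΓ ⟨hm, hfΓ'.2⟩
  -- the set of points where f does not vanish
  set T : Finset (Projectivization K (Fin (n + 1) → K)) :=
    Γ.filter (fun P => eval P.rep f ≠ 0) with hT
  have hTne : T.Nonempty := by
    rw [mem_vanishingIdeal_iff_of_isHomogeneous hfh] at hfnot
    push_neg at hfnot
    obtain ⟨P, hP, hPf⟩ := hfnot
    exact ⟨P, Finset.mem_filter.mpr ⟨Finset.mem_coe.mp hP, hPf⟩⟩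
  have hdisj : ∀ P ∈ T, P ∉ Γ' := by
    intro P hPT hPΓ'
    have := eval_rep_eq_zero hfΓ'.1 (Finset.mem_coe.mpr hPΓ')
    exact (Finset.mem_filter.mp hPT).2 this
  by_cases hT2 : 2 ≤ T.card
  · -- main case
    obtain ⟨P, hP, Q, hQ, hPQ⟩ := Finset.one_lt_card.mp hT2
    obtain ⟨φ, hφP, hφQ⟩ := exists_dual_sep hPQ
    set g : MvPolynomial (Fin (n + 1)) K := f * linPoly φ with hg
    have hgh : g.IsHomogeneous (a + 1) := hfh.mul (linPoly_isHomogeneous φ)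
    have hgmem : g ∈ vanishingIdeal ((insert P Γ' : Finset _) :
        Set (Projectivization K (Fin (n + 1) → K))) := by
      rw [mem_vanishingIdeal_iff_of_isHomogeneous hgh]
      intro R hR
      rw [Finset.coe_insert, Set.mem_insert_iff] at hR
      rcases hR with rfl | hR
      · simp [hg, eval_linPoly, hφP]
      · have := eval_rep_eq_zero hfΓ'.1 hR
        simp [hg, this]
    have hgnot : g ∉ vanishingIdeal (Γ : Set (Projectivization K (Fin (n + 1) → K))) := by
      intro hm
      have := eval_rep_eq_zero hm (Finset.mem_coe.mpr (Finset.mem_of_mem_filter Q hQ))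
      rw [hg, map_mul, eval_linPoly] at this
      rcases mul_eq_zero.mp this with h3 | h3
      · exact (Finset.mem_filter.mp hQ).2 h3
      · exact hφQ h3
    have hins : insert P Γ' ⊆ Γ :=
      Finset.insert_subset (Finset.mem_of_mem_filter P hP) hsub
    have hmem2 : sSup (S a) + 1 ∈ S (a + 1) := by
      refine ⟨insert P Γ', hins, ?_, ?_⟩
      · exact hdim_lt (vanishingIdeal_anti (by exact_mod_cast hins)) hgmem hgh hgnot
      · rw [Finset.card_insert_of_notMem (hdisj P hP), hcard]
    have h1 : sSup (S a) + 1 ≤ sSup (S (a + 1)) := le_csSup (hbdd (a + 1)) hmem2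
    have h2 : sSup (S (a + 1)) ≤ Γ.card := csSup_le (hne (a + 1) (by omega)) (by
      rintro k ⟨Δ, hΔ, -, rfl⟩; exact Finset.card_le_card hΔ)
    rw [hDef (a + 1), hDef a]
    omega
  · -- degenerate case : contradiction with hd
    exfalso
    obtain ⟨P, hP⟩ := hTne
    have hT1 : T = {P} := by
      apply Finset.eq_singleton_iff_unique_mem.mpr
      refine ⟨hP, fun Q hQ => ?_⟩
      by_contra hne'
      exact hT2 (Finset.one_lt_card.mpr ⟨Q, hQ, P, hP, hne'⟩)
    obtain ⟨i, hi⟩ : ∃ i, P.rep i ≠ 0 := Function.ne_iff.mp P.rep_nonzero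
    set φ : Module.Dual K (Fin (n + 1) → K) := LinearMap.proj i with hφ
    set g : MvPolynomial (Fin (n + 1)) K := f * linPoly φ with hg
    have hgh : g.IsHomogeneous (a + 1) := hfh.mul (linPoly_isHomogeneous φ)
    have hgmem : g ∈ vanishingIdeal ((Γ.erase P : Finset _) :
        Set (Projectivization K (Fin (n + 1) → K))) := by
      rw [mem_vanishingIdeal_iff_of_isHomogeneous hgh]
      intro R hR
      rw [Finset.coe_erase, Set.mem_diff, Set.mem_singleton_iff] at hR
      have hRf : eval R.rep f = 0 := by
        by_contra hne'
        have : R ∈ T := Finset.mem_filter.mpr ⟨Finset.mem_coe.mp hR.1, hne'⟩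
        rw [hT1, Finset.mem_singleton] at this
        exact hR.2 this
      simp [hg, hRf]
    have hgnot : g ∉ vanishingIdeal (Γ : Set (Projectivization K (Fin (n + 1) → K))) := by
      intro hm
      have := eval_rep_eq_zero hm (Finset.mem_coe.mpr (Finset.mem_of_mem_filter P hP))
      rw [hg, map_mul, eval_linPoly] at this
      rcases mul_eq_zero.mp this with h3 | h3
      · exact (Finset.mem_filter.mp hP).2 h3
      · exact hi (by simpa [hφ] using h3)
    have hmem2 : Γ.card - 1 ∈ S (a + 1) := by
      refine ⟨Γ.erase P, Finset.erase_subset _ _, ?_, ?_⟩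
      · exact hdim_lt (vanishingIdeal_anti (by exact_mod_cast Finset.erase_subset _ _))
          hgmem hgh hgnot
      · rw [Finset.card_erase_of_mem (Finset.mem_of_mem_filter P hP)]
    have h1 : Γ.card - 1 ≤ sSup (S (a + 1)) := le_csSup (hbdd (a + 1)) hmem2
    have hcardpos : 1 ≤ Γ.card := Finset.card_pos.mpr hΓ
    rw [hDef (a + 1)] at hd
    omega

end Key


/-- If `d(Γ)_b ≥ 2` for some `b ≥ 2`, then
`d(Γ)_a ≥ d(Γ)_(a+1) + 1` for all `1 ≤ a ≤ b - 1`. -/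
theorem higherD_recursion
    {K : Type} [Field K] [CharZero K] {n : ℕ}
    (Γ : Finset (Projectivization K (Fin (n + 1) → K)))
    (hnd : Nondeg Γ)
    {b : ℕ} (hb : 2 ≤ b) (hd : 2 ≤ higherD Γ b) :
    ∀ a, 1 ≤ a → a ≤ b - 1 → higherD Γ (a + 1) + 1 ≤ higherD Γ a := by
  have aux : ∀ k j, j + k = b - 1 → 1 ≤ j → 2 ≤ higherD Γ (j + 1) := by
    intro k
    induction k with
    | zero =>
      intro j hj _
      have : j + 1 = b := by omega
      rw [this]; exact hd
    | succ k ih =>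
      intro j hj hj1
      have h2 := ih (j + 1) (by omega) (by omega)
      have := key Γ hnd (a := j + 1) (by omega) h2
      omega
  intro a ha hab
  exact key Γ hnd ha (aux (b - 1 - a) a (by omega) ha)


end PointsMinDist
end
end

section
/- Let Γ = {P_1,…,P_m} ⊂ P^n_K be a reduced non-degenerate finite set of points, and let δ = min{δ(P_i) : i = 1,…,m} be the minimum of the degrees of the points of Γ. If δ ≥ 2, then d(Γ)_{δ−1} ≥ 2. -/
/-!
Below the degree `δ(P)` of a point, deleting `P` does not enlarge the ideal: `I(Γ \ {P})_d = I(Γ)_d`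
for `d < δ(P)`. Hence in degree `δ - 1` no subset obtained by deleting a single point has a bigger
ideal, so every subset `Γ'` with `dim I(Γ')_{δ-1} > dim I(Γ)_{δ-1}` misses at least two points.
If no such subset exists, `d(Γ)_{δ-1} = |Γ|`, and `|Γ| ≥ 2` because a lone point has degree `0`:
the constants vanish on `∅` but not on a point.
-/

open MvPolynomial

noncomputable section

namespace PointsMinDist

variable {K : Type} [Field K]

section

variable {m : ℕ}

theorem vanishingIdeal_empty :
    vanishingIdeal (∅ : Set (Projectivization K (Fin m → K))) = ⊤ :=
  eq_top_iff.mpr fun _ _ _ hP => hP.elim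

theorem degPart_vanishingIdeal_zero_eq_bot {Γ : Set (Projectivization K (Fin m → K))}
    (hΓ : Γ.Nonempty) : degPart (vanishingIdeal Γ) 0 = ⊥ := by
  obtain ⟨P, hP⟩ := hΓ
  refine eq_bot_iff.mpr fun f ⟨hvan, hhom⟩ => ?_
  obtain ⟨c, rfl⟩ : ∃ c, f = C c :=
    ⟨_, totalDegree_eq_zero_iff_eq_C.mp ((totalDegree_zero_iff_isHomogeneous _).mpr hhom)⟩
  have hc : c = 0 := by simpa using hvan P hP P.rep P.rep_nonzero P.mk_rep
  simp [hc]

theorem hdim_vanishingIdeal_empty_zero :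
    hdim (vanishingIdeal (∅ : Set (Projectivization K (Fin m → K)))) 0 = 1 := by
  rw [hdim, degPart, vanishingIdeal_empty, Submodule.restrictScalars_top, top_inf_eq,
    homogeneousSubmodule_zero, Submodule.one_eq_span]
  exact finrank_span_singleton one_ne_zero

theorem hdim_vanishingIdeal_singleton_zero (P : Projectivization K (Fin m → K)) :
    hdim (vanishingIdeal ({P} : Set (Projectivization K (Fin m → K)))) 0 = 0 := by
  rw [hdim, degPart_vanishingIdeal_zero_eq_bot (Set.singleton_nonempty P), finrank_bot]

theorem pointDegree_singleton_self (P : Projectivization K (Fin m → K)) :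
    pointDegree {P} P = 0 := by
  refine Nat.eq_zero_of_le_zero (Nat.sInf_le ?_)
  simp only [Set.mem_ofPred_eq, Finset.erase_singleton, Finset.coe_empty, Finset.coe_singleton,
    hdim_vanishingIdeal_empty_zero, hdim_vanishingIdeal_singleton_zero, Nat.lt_one_iff]

open Classical in
theorem hdim_vanishingIdeal_erase_le_of_lt_pointDegree
    {Γ : Finset (Projectivization K (Fin m → K))} {P : Projectivization K (Fin m → K)} {d : ℕ}
    (hd : d < pointDegree Γ P) :
    hdim (vanishingIdeal (Γ.erase P : Set (Projectivization K (Fin m → K)))) d ≤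
      hdim (vanishingIdeal (Γ : Set (Projectivization K (Fin m → K)))) d :=
  not_lt.mp fun hlt => Nat.notMem_of_lt_sInf hd hlt

theorem one_lt_card_of_forall_pointDegree_pos {Γ : Finset (Projectivization K (Fin m → K))}
    (hne : Γ.Nonempty) (hpos : ∀ P ∈ Γ, 0 < pointDegree Γ P) : 1 < Γ.card := by
  by_contra! hle
  obtain ⟨P, rfl⟩ := Finset.card_eq_one.mp (le_antisymm hle hne.card_pos)
  exact (hpos P (Finset.mem_singleton_self P)).ne' (pointDegree_singleton_self P)

open Classical in
theorem card_add_two_le_of_hdim_lt {Γ Γ' : Finset (Projectivization K (Fin m → K))} {d : ℕ}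
    (hΓ : ∀ P ∈ Γ, d < pointDegree Γ P) (hsub : Γ' ⊆ Γ)
    (hlt : hdim (vanishingIdeal (Γ : Set (Projectivization K (Fin m → K)))) d <
      hdim (vanishingIdeal (Γ' : Set (Projectivization K (Fin m → K)))) d) :
    Γ'.card + 2 ≤ Γ.card := by
  have hss : Γ' ⊂ Γ := hsub.ssubset_of_ne (by rintro rfl; exact hlt.false)
  obtain ⟨P, hP, hsub'⟩ := Finset.ssubset_iff_exists_subset_erase.mp hss
  have hss' : Γ' ⊂ Γ.erase P := hsub'.ssubset_of_ne <| by
    intro heq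
    rw [heq] at hlt
    exact (hdim_vanishingIdeal_erase_le_of_lt_pointDegree (hΓ P hP)).not_gt hlt
  have := Finset.card_lt_card hss'
  rw [Finset.card_erase_of_mem hP] at this
  omega

theorem le_higherD_of_forall_card_add_le {Γ : Finset (Projectivization K (Fin m → K))}
    {a k : ℕ} (hk : k ≤ Γ.card)
    (h : ∀ Γ' ⊆ Γ, hdim (vanishingIdeal (Γ : Set (Projectivization K (Fin m → K)))) a <
      hdim (vanishingIdeal (Γ' : Set (Projectivization K (Fin m → K)))) a →
        Γ'.card + k ≤ Γ.card) :
    k ≤ higherD Γ a := by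
  have hsSup : sSup {j | ∃ Γ' ⊆ Γ,
      hdim (vanishingIdeal (Γ' : Set (Projectivization K (Fin m → K)))) a >
        hdim (vanishingIdeal (Γ : Set (Projectivization K (Fin m → K)))) a ∧ j = Γ'.card} ≤
      Γ.card - k :=
    csSup_le' fun _ ⟨Γ', hsub, hlt, hcard⟩ => by have := h Γ' hsub hlt; omega
  rw [higherD]
  omega

end

theorem higherD_delta_sub_one_ge_two_general
    {K : Type} [Field K] {n : ℕ}
    (Γ : Finset (Projectivization K (Fin (n + 1) → K)))
    (hne : Γ.Nonempty)
    (δ : ℕ) (hδ : δ = Γ.inf' hne (fun P => pointDegree Γ P))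
    (hδ2 : 2 ≤ δ) :
    2 ≤ higherD Γ (δ - 1) := by
  have hlt : ∀ P ∈ Γ, δ - 1 < pointDegree Γ P := fun P hP => by
    have := hδ ▸ Finset.inf'_le _ hP
    omega
  exact le_higherD_of_forall_card_add_le
    (one_lt_card_of_forall_pointDegree_pos hne fun P hP => (Nat.zero_le _).trans_lt (hlt P hP))
    fun _ hsub hgt => card_add_two_le_of_hdim_lt hlt hsub hgt

/-- If `δ = min {δ(P) : P ∈ Γ} ≥ 2`, then `d(Γ)_(δ-1) ≥ 2`. -/
theorem higherD_delta_sub_one_ge_two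
    {K : Type} [Field K] [CharZero K] {n : ℕ}
    (Γ : Finset (Projectivization K (Fin (n + 1) → K)))
    (hnd : Nondeg Γ) (hne : Γ.Nonempty)
    (δ : ℕ) (hδ : δ = Γ.inf' hne (fun P => pointDegree Γ P))
    (hδ2 : 2 ≤ δ) :
    2 ≤ higherD Γ (δ - 1) :=
  higherD_delta_sub_one_ge_two_general Γ hne δ hδ hδ2

end PointsMinDist
end
end

section
/- In the Migliore construction, with I_1 = ⟨x_0, J⟩ the ideal of Γ_1 and I_2 = ⟨∏_{i=1}^{β}(u_i x_0 − x_1), x_2 − x_0, …, x_n − x_0⟩ the ideal of Γ_2, one has I_1 + I_2 = ⟨x_0, x_1^t, x_2, …, x_n⟩, where t = min{v, β} and v is determined by ⟨J, x_2,…,x_n⟩ = ⟨x_1^v, x_2,…,x_n⟩. In particular I_1 + I_2 is a complete intersection of codimension n + 1. -/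
open MvPolynomial

noncomputable section

namespace PointsMinDist

variable {K : Type} [Field K]

/-- Embedding of points of `P^{m-1}` into the hyperplane `x_0 = 0` of `P^m`. -/
def embedPt {m : ℕ} (P : Projectivization K (Fin m → K)) :
    Projectivization K (Fin (m + 1) → K) :=
  Projectivization.mk K (Fin.cons 0 P.rep) (by
    intro h
    apply P.rep_nonzero
    funext i
    simpa using congrFun h i.succ)

/-- The point `[1, c, 1, …, 1]` of `P^n` (a point on a line avoiding `x_0 = 0`). -/
def linePt (n : ℕ) (c : K) : Projectivization K (Fin (n + 1) → K) :=
  Projectivization.mk K (fun j => if (j : ℕ) = 1 then c else 1) (by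
    intro h
    have h0 := congrFun h 0
    simp at h0)

open Classical in
/-- The set `Γ = Γ₁ ∪ Γ₂` of the Migliore construction: a set `Γ₀` of points of
`P^{n-1}` embedded into the hyperplane `x_0 = 0`, together with the points
`[1, u_i, 1, …, 1]` on a line. -/
def MigGamma {n : ℕ} (Γ₀ : Finset (Projectivization K (Fin n → K)))
    {β : ℕ} (u : Fin β → K) : Finset (Projectivization K (Fin (n + 1) → K)) :=
  Γ₀.image embedPt ∪ Finset.univ.image (fun i => linePt n (u i))

/-- The ideal `I₁ = ⟨x_0, J⟩ ⊆ R = K[x_0, …, x_n]`, where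
`J ⊆ S = K[x_1, …, x_n]` (vars of `S` indexed by `Fin n`, with `X i` of `S`
corresponding to `x_{i+1}` of `R`). -/
def I1 {n : ℕ} (J : Ideal (MvPolynomial (Fin n) K)) :
    Ideal (MvPolynomial (Fin (n + 1)) K) :=
  Ideal.span {X 0} ⊔ Ideal.map (rename (Fin.succ : Fin n → Fin (n + 1))) J

/-- The polynomial `∏_{i=1}^β (u_i x_0 - x_1)`. -/
def prodPoly (n β : ℕ) (u : Fin β → K) : MvPolynomial (Fin (n + 1)) K :=
  ∏ i : Fin β, (C (u i) * X 0 - X 1)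

/-- The ideal `I₂ = ⟨∏ (u_i x_0 - x_1), x_2 - x_0, …, x_n - x_0⟩` of the `β`
points `[1, u_i, 1, …, 1]` on a line. -/
def I2 (n β : ℕ) (u : Fin β → K) : Ideal (MvPolynomial (Fin (n + 1)) K) :=
  Ideal.span ({prodPoly n β u} ∪
    {f | ∃ j : Fin (n + 1), 2 ≤ (j : ℕ) ∧ f = X j - X 0})

/-- The sequence `x_0, x_1^t, x_2, …, x_n`. -/
def ciList (K : Type) [Field K] (n t : ℕ) : List (MvPolynomial (Fin (n + 1)) K) :=
  X 0 :: X 1 ^ t :: ((List.finRange (n + 1)).drop 2).map X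

/-- The complete intersection ideal `⟨x_0, x_1^t, x_2, …, x_n⟩`. -/
def CIdeal (K : Type) [Field K] (n t : ℕ) : Ideal (MvPolynomial (Fin (n + 1)) K) :=
  Ideal.span {f | f ∈ ciList K n t}

/-- The set `𝒜 = {x_0(x_2 - x_0), …, x_0(x_n - x_0), x_0·∏(u_i x_0 - x_1)}`. -/
def calA (n β : ℕ) (u : Fin β → K) : Set (MvPolynomial (Fin (n + 1)) K) :=
  {f | ∃ j : Fin (n + 1), 2 ≤ (j : ℕ) ∧ f = X 0 * (X j - X 0)} ∪
    {X 0 * prodPoly n β u}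

end PointsMinDist

/-!
Modulo `x_0`, the generator `∏ (u_i x_0 - x_1)` of `I₂` is `(-x_1)^β` and `x_j - x_0` is `x_j`,
while modulo `x_2, …, x_n` the ideal `J` is `⟨x_1^v⟩`. Hence `I₁ + I₂` is generated by `x_0`,
`x_1^v`, `x_1^β`, `x_2, …, x_n`, that is by `x_0, x_1^t, x_2, …, x_n`. Pure powers of distinct
variables form a regular sequence: a monomial ideal generated by monomials not involving `x_b`
is saturated with respect to `x_b`.
-/

namespace Fin

theorem two_le_val_of_ne_zero_of_ne_one {n : ℕ} {j : Fin (n + 1)} (h0 : j ≠ 0) (h1 : j ≠ 1) :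
    2 ≤ (j : ℕ) := by
  rcases j with ⟨_ | _ | k, hk⟩
  · exact absurd rfl h0
  · exact absurd (Fin.ext (Nat.mod_eq_of_lt hk).symm) h1
  · exact Nat.le_add_left 2 k

theorem ne_one_of_two_le_val {n : ℕ} {j : Fin (n + 1)} (h : 2 ≤ (j : ℕ)) : j ≠ 1 :=
  fun h1 => absurd (h1 ▸ h) (by simpa using (Nat.mod_le 1 (n + 1)).trans_lt one_lt_two)

end Fin

namespace MvPolynomial

variable {σ R : Type*}

theorem mem_span_X_pow_image_of_X_pow_mul_mem [CommSemiring R] {e : σ → ℕ} {s : Set σ} {b : σ}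
    (hb : b ∉ s) {d : ℕ} {f : MvPolynomial σ R}
    (h : X b ^ d * f ∈ Ideal.span ((fun j => X j ^ e j) '' s)) :
    f ∈ Ideal.span ((fun j => X j ^ e j) '' s) := by
  have hmon : ((fun j => X j ^ e j) '' s : Set (MvPolynomial σ R)) =
      (fun m => monomial m 1) '' ((fun j => Finsupp.single j (e j)) '' s) := by
    rw [Set.image_image]
    exact Set.image_congr fun j _ => X_pow_eq_monomial
  rw [hmon, mem_ideal_span_monomial_image] at h ⊢
  intro m hm
  have hbm : Finsupp.single b d + m ∈ (X b ^ d * f).support := by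
    rwa [mem_support_iff, X_pow_eq_monomial, coeff_monomial_mul, one_mul, ← mem_support_iff]
  obtain ⟨_, ⟨j, hj, rfl⟩, hle⟩ := h _ hbm
  have hjb : j ≠ b := fun hjb => hb (hjb ▸ hj)
  refine ⟨_, ⟨j, hj, rfl⟩, ?_⟩
  rw [Finsupp.single_le_iff] at hle ⊢
  rwa [Finsupp.add_apply, Finsupp.single_eq_of_ne hjb, zero_add] at hle

theorem isRegular_map_X_pow [CommRing R] [Nontrivial R] {l : List σ} (hl : l.Nodup)
    {e : σ → ℕ} (he : ∀ j ∈ l, e j ≠ 0) :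
    RingTheory.Sequence.IsRegular (MvPolynomial σ R)
      (l.map fun j => (X j ^ e j : MvPolynomial σ R)) := by
  have hofList (l' : List σ) :
      (Ideal.ofList (l'.map fun j => (X j ^ e j : MvPolynomial σ R)) • ⊤ :
        Submodule (MvPolynomial σ R) (MvPolynomial σ R)) =
        Ideal.span ((fun j => X j ^ e j) '' {j | j ∈ l'}) := by
    rw [smul_eq_mul, Ideal.mul_top, Ideal.ofList]
    congr 1
    ext
    simp
  refine ⟨⟨fun i hi => ?_⟩, ?_⟩
  · rw [List.length_map] at hi
    rw [← List.map_take, hofList, List.getElem_map,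
      isSMulRegular_quotient_iff_mem_of_smul_mem]
    refine fun f hf => mem_span_X_pow_image_of_X_pow_mul_mem (fun hmem => ?_) hf
    refine List.disjoint_take_drop hl le_rfl hmem ?_
    rw [List.drop_eq_getElem_cons hi]
    exact List.mem_cons_self
  · rw [hofList, ne_comm, Ne, Ideal.eq_top_iff_one]
    intro h1
    have hle : Ideal.span ((fun j => X j ^ e j) '' {j | j ∈ l}) ≤
        RingHom.ker (constantCoeff : MvPolynomial σ R →+* R) := by
      rw [Ideal.span_le]
      rintro _ ⟨j, hj, rfl⟩
      simp [zero_pow (he j hj)]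
    simpa using hle h1

end MvPolynomial

namespace PointsMinDist

variable {K : Type} [Field K] {n : ℕ}

def ciExp (n t : ℕ) : Fin (n + 1) → ℕ := Function.update (fun _ => 1) 1 t

theorem ciExp_one (t : ℕ) : ciExp n t 1 = t := Function.update_self ..

theorem ciExp_of_ne_one (t : ℕ) {j : Fin (n + 1)} (hj : j ≠ 1) : ciExp n t j = 1 :=
  Function.update_of_ne hj ..

theorem ciList_eq_map (h0 : 0 < n) (t : ℕ) :
    ciList K n t = (List.finRange (n + 1)).map fun j => X j ^ ciExp n t j := by
  obtain ⟨m, rfl⟩ : ∃ m, n = m + 1 := ⟨n - 1, by omega⟩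
  simp [ciList, List.finRange_succ, ciExp, Function.update_apply, Fin.succ_succ_ne_one]

theorem length_ciList (h0 : 0 < n) (t : ℕ) : (ciList K n t).length = n + 1 := by
  simp only [ciList, List.length_cons, List.length_map, List.length_drop, List.length_finRange]
  omega

theorem isRegular_ciList (h0 : 0 < n) {t : ℕ} (ht : t ≠ 0) :
    RingTheory.Sequence.IsRegular (MvPolynomial (Fin (n + 1)) K) (ciList K n t) := by
  rw [ciList_eq_map h0]
  refine isRegular_map_X_pow (List.nodup_finRange _) fun j _ => ?_
  obtain rfl | hj := eq_or_ne j 1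
  · rwa [ciExp_one]
  · simp [ciExp_of_ne_one t hj]

theorem CIdeal_eq_span (h0 : 0 < n) (t : ℕ) :
    CIdeal K n t = Ideal.span (Set.range fun j => X j ^ ciExp n t j) := by
  rw [CIdeal, ciList_eq_map h0]
  congr 1
  ext
  simp

theorem CIdeal_le_iff (h0 : 0 < n) {t : ℕ} {I : Ideal (MvPolynomial (Fin (n + 1)) K)} :
    CIdeal K n t ≤ I ↔ ∀ j, X j ^ ciExp n t j ∈ I := by
  rw [CIdeal_eq_span h0, Ideal.span_le, Set.range_subset_iff]
  rfl

theorem X_pow_ciExp_mem_CIdeal (h0 : 0 < n) (t : ℕ) (j : Fin (n + 1)) :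
    X j ^ ciExp n t j ∈ CIdeal K n t :=
  (CIdeal_le_iff h0).mp le_rfl j

theorem X_mem_CIdeal (h0 : 0 < n) (t : ℕ) {j : Fin (n + 1)} (hj : j ≠ 1) :
    X j ∈ CIdeal K n t := by
  simpa [ciExp_of_ne_one t hj] using X_pow_ciExp_mem_CIdeal (K := K) h0 t j

theorem X_one_pow_mem_CIdeal (h0 : 0 < n) {t w : ℕ} (h : t ≤ w) :
    X 1 ^ w ∈ CIdeal K n t :=
  Ideal.pow_mem_of_pow_mem _
    (by simpa only [ciExp_one] using X_pow_ciExp_mem_CIdeal (K := K) h0 t 1) h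

theorem prodPoly_sub_neg_X_one_pow_mem (β : ℕ) (u : Fin β → K) :
    prodPoly n β u - (-X 1) ^ β ∈ Ideal.span {(X 0 : MvPolynomial (Fin (n + 1)) K)} := by
  rw [← Ideal.Quotient.eq]
  have hX0 : Ideal.Quotient.mk (Ideal.span {(X 0 : MvPolynomial (Fin (n + 1)) K)}) (X 0) = 0 :=
    Ideal.Quotient.eq_zero_iff_mem.mpr (Ideal.mem_span_singleton_self _)
  simp [prodPoly, hX0, Finset.prod_const]

theorem rename_succ_X_zero (h : 0 < n) :
    rename Fin.succ (X ⟨0, h⟩ : MvPolynomial (Fin n) K) = X 1 := by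
  rw [rename_X]
  congr
  ext
  simp [Nat.mod_eq_of_lt (Nat.succ_lt_succ h)]

theorem map_rename_span_X_le {I : Ideal (MvPolynomial (Fin (n + 1)) K)}
    (h : ∀ j : Fin (n + 1), 2 ≤ (j : ℕ) → X j ∈ I) :
    Ideal.map (rename Fin.succ) (Ideal.span {f | ∃ i : Fin n, 1 ≤ (i : ℕ) ∧ f = X i}) ≤ I := by
  rw [Ideal.map_span, Ideal.span_le]
  rintro _ ⟨_, ⟨i, hi, rfl⟩, rfl⟩
  rw [rename_X]
  exact h _ (by simpa using hi)

theorem map_le_CIdeal {J : Ideal (MvPolynomial (Fin n) K)} {t v : ℕ} (h0 : 0 < n)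
    (hJ : J ≤ Ideal.span ({X ⟨0, h0⟩ ^ v} ∪ {f | ∃ i : Fin n, 1 ≤ (i : ℕ) ∧ f = X i}))
    (ht : t ≤ v) :
    Ideal.map (rename Fin.succ) J ≤ CIdeal K n t := by
  refine (Ideal.map_mono hJ).trans ?_
  rw [Ideal.span_union, Ideal.map_sup, sup_le_iff, Ideal.map_span, Set.image_singleton,
    Ideal.span_singleton_le_iff_mem, map_pow, rename_succ_X_zero]
  exact ⟨X_one_pow_mem_CIdeal h0 ht,
    map_rename_span_X_le fun j hj => X_mem_CIdeal h0 t (Fin.ne_one_of_two_le_val hj)⟩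

section I1_sup_I2

variable {J : Ideal (MvPolynomial (Fin n) K)} {β : ℕ} {u : Fin β → K}

theorem X_zero_mem_I1_sup_I2 : X 0 ∈ I1 J ⊔ I2 n β u :=
  Ideal.mem_sup_left (Ideal.mem_sup_left (Ideal.mem_span_singleton_self _))

theorem X_mem_I1_sup_I2 {j : Fin (n + 1)} (hj : 2 ≤ (j : ℕ)) : X j ∈ I1 J ⊔ I2 n β u :=
  (Submodule.sub_mem_iff_left _ X_zero_mem_I1_sup_I2).mp
    (Ideal.mem_sup_right (Ideal.subset_span (Or.inr ⟨j, hj, rfl⟩)))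

theorem X_one_pow_mem_I1_sup_I2 : X 1 ^ β ∈ I1 J ⊔ I2 n β u := by
  have hprod : prodPoly n β u ∈ I1 J ⊔ I2 n β u :=
    Ideal.mem_sup_right (Ideal.subset_span (Or.inl rfl))
  have hX0 : Ideal.span {X 0} ≤ I1 J ⊔ I2 n β u :=
    (Ideal.span_singleton_le_iff_mem _).mpr X_zero_mem_I1_sup_I2
  have hneg : (-X 1) ^ β ∈ I1 J ⊔ I2 n β u :=
    (Submodule.sub_mem_iff_right _ hprod).mp (hX0 (prodPoly_sub_neg_X_one_pow_mem β u))
  rw [show (X 1 : MvPolynomial (Fin (n + 1)) K) ^ β = (-1) ^ β * (-X 1) ^ β by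
    rw [← mul_pow, neg_one_mul, neg_neg]]
  exact Ideal.mul_mem_left _ _ hneg

theorem X_one_pow_mem_I1_sup_I2_of_mem {v : ℕ} (h0 : 0 < n)
    (hJ : X ⟨0, h0⟩ ^ v ∈ J ⊔ Ideal.span {f | ∃ i : Fin n, 1 ≤ (i : ℕ) ∧ f = X i}) :
    X 1 ^ v ∈ I1 J ⊔ I2 n β u := by
  have hmap := Ideal.mem_map_of_mem (rename Fin.succ) hJ
  rw [Ideal.map_sup, map_pow, rename_succ_X_zero] at hmap
  exact sup_le (le_sup_right.trans le_sup_left) (map_rename_span_X_le fun j => X_mem_I1_sup_I2)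
    hmap

theorem I1_sup_I2_le_CIdeal (h0 : 0 < n) {t : ℕ}
    (hJ : Ideal.map (rename Fin.succ) J ≤ CIdeal K n t) (ht : t ≤ β) :
    I1 J ⊔ I2 n β u ≤ CIdeal K n t := by
  have := NeZero.of_pos h0
  have hX0 : Ideal.span {X 0} ≤ CIdeal K n t :=
    (Ideal.span_singleton_le_iff_mem _).mpr (X_mem_CIdeal h0 t Fin.zero_ne_one')
  refine sup_le (sup_le hX0 hJ) ?_
  rw [I2, Ideal.span_le]
  rintro _ (rfl | ⟨j, hj, rfl⟩)
  · have hneg : (-X 1) ^ β ∈ CIdeal K n t := by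
      rw [neg_pow]
      exact Ideal.mul_mem_left _ _ (X_one_pow_mem_CIdeal h0 ht)
    exact (Submodule.sub_mem_iff_left _ hneg).mp (hX0 (prodPoly_sub_neg_X_one_pow_mem β u))
  · exact sub_mem (X_mem_CIdeal h0 t (Fin.ne_one_of_two_le_val hj))
      (hX0 (Ideal.mem_span_singleton_self _))

theorem CIdeal_le_I1_sup_I2 (h0 : 0 < n) {t : ℕ} (ht : X 1 ^ t ∈ I1 J ⊔ I2 n β u) :
    CIdeal K n t ≤ I1 J ⊔ I2 n β u := by
  refine (CIdeal_le_iff h0).mpr fun j => ?_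
  obtain rfl | hj1 := eq_or_ne j 1
  · rwa [ciExp_one]
  rw [ciExp_of_ne_one t hj1, pow_one]
  obtain rfl | hj0 := eq_or_ne j 0
  · exact X_zero_mem_I1_sup_I2
  · exact X_mem_I1_sup_I2 (Fin.two_le_val_of_ne_zero_of_ne_one hj0 hj1)

end I1_sup_I2

/-- In the Migliore construction,
`I₁ + I₂ = ⟨x_0, x_1^t, x_2, …, x_n⟩` where `t = min {v, β}`, and this is a
complete intersection of codimension `n + 1` (the `n + 1` generators form a
regular sequence). -/
theorem migliore_sum_of_ideals
    {K : Type} [Field K] {n α β : ℕ} (hn : 2 ≤ n)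
    (hα : 0 < α) (hβ : 0 < β)
    (Γ₀ : Finset (Projectivization K (Fin n → K)))
    (u : Fin β → K)
    (s : ℕ) (hs : α < (s + n - 1).choose (n - 1))
    (v : ℕ) (hvs : v = s ∨ v = s + 1)
    (hv : vanishingIdeal (Γ₀ : Set (Projectivization K (Fin n → K))) ⊔
        Ideal.span {f | ∃ i : Fin n, 1 ≤ (i : ℕ) ∧ f = X i} =
      Ideal.span ({X (⟨0, by omega⟩ : Fin n) ^ v} ∪ {f | ∃ i : Fin n, 1 ≤ (i : ℕ) ∧ f = X i})) :
    I1 (vanishingIdeal (Γ₀ : Set (Projectivization K (Fin n → K)))) ⊔ I2 n β u = CIdeal K n (min v β) ∧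
    RingTheory.Sequence.IsRegular (MvPolynomial (Fin (n + 1)) K)
      (ciList K n (min v β)) ∧
    (ciList K n (min v β)).length = n + 1 := by
  have h0 : 0 < n := by omega
  have hs0 : s ≠ 0 := by
    rintro rfl
    simp only [zero_add, Nat.choose_self] at hs
    omega
  refine ⟨le_antisymm ?_ ?_, isRegular_ciList h0 (by omega), length_ciList h0 _⟩
  · exact I1_sup_I2_le_CIdeal h0 (map_le_CIdeal h0 (le_sup_left.trans hv.le) (min_le_left v β))
      (min_le_right v β)
  · refine CIdeal_le_I1_sup_I2 h0 ?_
    rcases min_choice v β with h | h <;> rw [h]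
    · exact X_one_pow_mem_I1_sup_I2_of_mem h0 (hv ▸ Ideal.subset_span (Or.inl rfl))
    · exact X_one_pow_mem_I1_sup_I2

end PointsMinDist
end
end

section
/- In the Migliore construction, every homogeneous element f ∈ I = I_1 ∩ I_2 of degree strictly less than s belongs to the ideal generated by the set 𝒜 = {x_0(x_2 − x_0), …, x_0(x_n − x_0), x_0·∏_{i=1}^{β}(u_i x_0 − x_1)}. Consequently, every minimal generator of I other than those in 𝒜 has degree at least s. -/
open MvPolynomial

noncomputable section

namespace PointsMinDist

variable {K : Type} [Field K]

/-!
Let `f ∈ I₁ ∩ I₂` be homogeneous of degree `d < s`. Setting `x₀ = 0` sends `f` into `J`,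
whose Hilbert function is maximal in degree `d`; so `J_d = 0`, and `f = x₀ g`. Substituting
`x_j ↦ x₀` for `j ≥ 2` maps `I₂` into `⟨P⟩`, `P = ∏ (u_i x₀ - x₁)`, and fixes `x₀` and `P`.
As the prime `x₀` does not divide `P`, `P` divides the image of `g`, whence `g ∈ I₂`:
`x₀` is a nonzerodivisor modulo `I₂`. Finally `x₀ I₂ = ⟨𝒜⟩`.
-/

section

variable {σ R : Type*} [CommRing R]

theorem sub_mem_of_forall_X_sub_mem {φ : MvPolynomial σ R →ₐ[R] MvPolynomial σ R}
    {I : Ideal (MvPolynomial σ R)} (h : ∀ i, X i - φ (X i) ∈ I) (f : MvPolynomial σ R) :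
    f - φ f ∈ I := by
  have hφ : (Ideal.Quotient.mkₐ R I).comp φ = Ideal.Quotient.mkₐ R I :=
    algHom_ext fun i => (Ideal.Quotient.eq.mpr (h i)).symm
  exact Ideal.Quotient.eq.mp (congrArg (· f) hφ).symm

theorem finrank_homogeneousSubmodule [Fintype σ] [DecidableEq σ] [StrongRankCondition R]
    (d : ℕ) :
    Module.finrank R (homogeneousSubmodule σ R d) = (Fintype.card σ + d - 1).choose d := by
  have hsupp : {P : σ →₀ ℕ | P.degree = d} =
      ((Finset.univ : Finset σ).finsuppAntidiag d : Set (σ →₀ ℕ)) := by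
    ext P
    simp [Finset.mem_finsuppAntidiag, Finsupp.degree_eq_sum]
  rw [homogeneousSubmodule_eq_finsupp_supported, hsupp,
    (AddMonoidAlgebra.supportedEquivFinsupp _).finrank_eq, Module.finrank_finsupp_self]
  simp [Finset.card_finsuppAntidiag_nat_eq_choose]

end

theorem finrank_homogeneousSubmodule_fin {n : ℕ} (hn : 0 < n) (d : ℕ) :
    Module.finrank K (homogeneousSubmodule (Fin n) K d) = (d + n - 1).choose (n - 1) := by
  rw [finrank_homogeneousSubmodule, Fintype.card_fin, add_comm n d]
  exact Nat.choose_symm_of_eq_add (by omega)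

theorem eq_zero_of_HF_eq_finrank {m d : ℕ} {J : Ideal (MvPolynomial (Fin m) K)}
    (hHF : HF J d = Module.finrank K (homogeneousSubmodule (Fin m) K d))
    {p : MvPolynomial (Fin m) K} (hp : p.IsHomogeneous d) (hpJ : p ∈ J) : p = 0 := by
  have : Module.Finite K (homogeneousSubmodule (Fin m) K d) :=
    Module.Finite.iff_fg.mpr (homogeneousSubmodule_fg _ _ d)
  have hle : hdim J d ≤ Module.finrank K (homogeneousSubmodule (Fin m) K d) :=
    Submodule.finrank_mono inf_le_right
  have hbot : degPart J d = ⊥ := by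
    have : Module.Finite K (degPart J d) := Submodule.finiteDimensional_of_le inf_le_right
    rw [← Submodule.finrank_eq_zero]
    unfold HF at hHF
    unfold hdim at hle hHF
    omega
  exact (Submodule.mem_bot K).mp (hbot ▸ ⟨hpJ, hp⟩)

/-- Restriction to the hyperplane `x_0 = 0`; `X i` of the target stands for `x_{i+1}`. -/
def setX0Zero (n : ℕ) : MvPolynomial (Fin (n + 1)) K →ₐ[K] MvPolynomial (Fin n) K :=
  aeval (Fin.cons 0 X)

theorem setX0Zero_X_zero {n : ℕ} : setX0Zero n (X 0 : MvPolynomial (Fin (n + 1)) K) = 0 := by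
  simp [setX0Zero]

theorem setX0Zero_comp_rename_succ {n : ℕ} :
    (setX0Zero n).comp (rename Fin.succ) = AlgHom.id K (MvPolynomial (Fin n) K) :=
  algHom_ext fun i => by simp [setX0Zero]

theorem map_setX0Zero_I1_le {n : ℕ} (J : Ideal (MvPolynomial (Fin n) K)) :
    Ideal.map (setX0Zero n) (I1 J) ≤ J := by
  rw [I1, Ideal.map_sup, Ideal.map_span, Set.image_singleton, setX0Zero_X_zero,
    Ideal.span_singleton_zero, bot_sup_eq, Ideal.map_le_iff_le_comap, Ideal.map_le_iff_le_comap]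
  intro p hp
  rwa [Ideal.mem_comap, Ideal.mem_comap, ← AlgHom.comp_apply, setX0Zero_comp_rename_succ,
    AlgHom.id_apply]

theorem isHomogeneous_setX0Zero {n d : ℕ} {f : MvPolynomial (Fin (n + 1)) K}
    (hf : f.IsHomogeneous d) : (setX0Zero n f).IsHomogeneous d := by
  have hX : ∀ i, ((Fin.cons 0 X : Fin (n + 1) → MvPolynomial (Fin n) K) i).IsHomogeneous 1 := by
    intro i
    cases i using Fin.cases
    · exact isHomogeneous_zero _ _ _
    · exact isHomogeneous_X _ _
  exact (one_mul d) ▸ hf.aeval _ hX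

theorem X_zero_dvd_of_setX0Zero_eq_zero {n : ℕ} {f : MvPolynomial (Fin (n + 1)) K}
    (hf : setX0Zero n f = 0) : X 0 ∣ f := by
  have hX : ∀ i, X i - (rename Fin.succ).comp (setX0Zero n) (X i) ∈
      Ideal.span {(X 0 : MvPolynomial (Fin (n + 1)) K)} :=
    Fin.cases (by simp [setX0Zero_X_zero]) fun i => by simp [setX0Zero]
  simpa [hf, Ideal.mem_span_singleton] using sub_mem_of_forall_X_sub_mem hX f

/-- Restriction to the plane `x_2 = ⋯ = x_n = x_0` containing the line of `Γ₂`. -/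
def lineSubst (n : ℕ) : MvPolynomial (Fin (n + 1)) K →ₐ[K] MvPolynomial (Fin (n + 1)) K :=
  aeval fun j => if 2 ≤ (j : ℕ) then X 0 else X j

theorem lineSubst_X_of_lt {n : ℕ} {j : Fin (n + 1)} (hj : (j : ℕ) < 2) :
    lineSubst n (X j : MvPolynomial (Fin (n + 1)) K) = X j := by
  simp [lineSubst, hj.not_ge]

@[simp]
theorem lineSubst_X_zero {n : ℕ} : lineSubst n (X 0 : MvPolynomial (Fin (n + 1)) K) = X 0 :=
  lineSubst_X_of_lt (by simp)

theorem lineSubst_prodPoly {n β : ℕ} (u : Fin β → K) :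
    lineSubst n (prodPoly n β u) = prodPoly n β u := by
  have h1 : ((1 : Fin (n + 1)) : ℕ) < 2 := by
    rw [Fin.val_one']
    exact (Nat.mod_le _ _).trans_lt one_lt_two
  simp [prodPoly, lineSubst_X_of_lt h1]

theorem map_lineSubst_I2_le {n β : ℕ} (u : Fin β → K) :
    Ideal.map (lineSubst n) (I2 n β u) ≤ Ideal.span {prodPoly n β u} := by
  rw [I2, Ideal.map_span, Ideal.span_le]
  rintro _ ⟨g, rfl | ⟨j, hj, rfl⟩, rfl⟩
  · rw [lineSubst_prodPoly]
    exact Ideal.mem_span_singleton_self _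
  · simp [lineSubst, hj]

theorem sub_lineSubst_mem_I2 {n β : ℕ} (u : Fin β → K) (f : MvPolynomial (Fin (n + 1)) K) :
    f - lineSubst n f ∈ I2 n β u := by
  refine sub_mem_of_forall_X_sub_mem (fun j => ?_) f
  by_cases hj : 2 ≤ (j : ℕ)
  · have hgen : X j - X 0 ∈ I2 n β u :=
      Ideal.subset_span (Set.mem_union_right _ ⟨j, hj, rfl⟩)
    simpa [lineSubst, hj] using hgen
  · simp [lineSubst, hj]

theorem X_zero_not_dvd_prodPoly {n β : ℕ} [NeZero n] (u : Fin β → K) :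
    ¬ (X 0 : MvPolynomial (Fin (n + 1)) K) ∣ prodPoly n β u := by
  intro h
  have := (eval fun j : Fin (n + 1) => if j = 0 then (0 : K) else 1).map_dvd h
  simp [prodPoly] at this

theorem mem_I2_of_X_zero_mul_mem {n β : ℕ} [NeZero n] (u : Fin β → K)
    {g : MvPolynomial (Fin (n + 1)) K} (hg : X 0 * g ∈ I2 n β u) : g ∈ I2 n β u := by
  have hsubst : X 0 * lineSubst n g ∈ Ideal.span {prodPoly n β u} := by
    simpa using map_lineSubst_I2_le u (Ideal.mem_map_of_mem _ hg)
  have hdvd : prodPoly n β u ∣ lineSubst n g :=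
    ((X_prime : Prime (X 0 : MvPolynomial (Fin (n + 1)) K)).left_dvd_or_dvd_right_of_dvd_mul
      (Ideal.mem_span_singleton.mp hsubst)).resolve_left (X_zero_not_dvd_prodPoly u)
  have hspan : Ideal.span {prodPoly n β u} ≤ I2 n β u :=
    Ideal.span_mono Set.subset_union_left
  simpa using add_mem (sub_lineSubst_mem_I2 u g) (hspan (Ideal.mem_span_singleton.mpr hdvd))

theorem X_zero_mul_mem_span_calA {n β : ℕ} (u : Fin β → K) {g : MvPolynomial (Fin (n + 1)) K}
    (hg : g ∈ I2 n β u) : X 0 * g ∈ Ideal.span (calA n β u) := by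
  have hmul := Ideal.mul_mem_mul (Ideal.mem_span_singleton_self (X 0)) hg
  rw [I2, Ideal.span_mul_span'] at hmul
  refine Ideal.span_mono ?_ hmul
  rintro _ ⟨_, rfl, x, rfl | ⟨j, hj, rfl⟩, rfl⟩
  · exact Or.inr rfl
  · exact Or.inl ⟨j, hj, rfl⟩

theorem migliore_low_degree_elements_general
    {K : Type} [Field K] {n α β : ℕ} (hn : 2 ≤ n)
    (Γ₀ : Finset (Projectivization K (Fin n → K)))
    (hgen : ∀ i, HF (vanishingIdeal (Γ₀ : Set (Projectivization K (Fin n → K)))) i =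
      min ((i + n - 1).choose (n - 1)) α)
    (u : Fin β → K)
    (s : ℕ)
    (hsmin : ∀ j, α < (j + n - 1).choose (n - 1) → s ≤ j) :
    (∀ f ∈ I1 (vanishingIdeal (Γ₀ : Set (Projectivization K (Fin n → K)))) ⊓ I2 n β u,
      ∀ d, d < s → f.IsHomogeneous d → f ∈ Ideal.span (calA n β u)) ∧
    (∀ f ∈ I1 (vanishingIdeal (Γ₀ : Set (Projectivization K (Fin n → K)))) ⊓ I2 n β u,
      ∀ d, f.IsHomogeneous d → f ∉ Ideal.span (calA n β u) → s ≤ d) := by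
  have : NeZero n := ⟨by omega⟩
  have low : ∀ f ∈ I1 (vanishingIdeal (Γ₀ : Set (Projectivization K (Fin n → K)))) ⊓
      I2 n β u, ∀ d, d < s → f.IsHomogeneous d → f ∈ Ideal.span (calA n β u) := by
    rintro f ⟨hf₁, hf₂⟩ d hd hf
    have hHF : HF (vanishingIdeal (Γ₀ : Set (Projectivization K (Fin n → K)))) d =
        Module.finrank K (homogeneousSubmodule (Fin n) K d) := by
      rw [hgen, finrank_homogeneousSubmodule_fin (by omega),
        min_eq_left (not_lt.mp fun h => (hsmin d h).not_gt hd)]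
    obtain ⟨g, rfl⟩ := X_zero_dvd_of_setX0Zero_eq_zero <|
      eq_zero_of_HF_eq_finrank hHF (isHomogeneous_setX0Zero hf)
      (map_setX0Zero_I1_le _ (Ideal.mem_map_of_mem _ hf₁))
    exact X_zero_mul_mem_span_calA u (mem_I2_of_X_zero_mul_mem u hf₂)
  exact ⟨low, fun f hf d hfd hnot => not_lt.mp fun hd => hnot (low f hf d hd hfd)⟩

/-- (The Claim.) In the Migliore construction, every
homogeneous `f ∈ I = I₁ ∩ I₂` of degree `< s` lies in the ideal generated by
`𝒜 = {x_0(x_2-x_0), …, x_0(x_n-x_0), x_0·∏(u_i x_0 - x_1)}`; consequently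
every homogeneous element of `I` not in `⟨𝒜⟩` (in particular every minimal
generator of `I` other than those in `𝒜`) has degree at least `s`. -/
theorem migliore_low_degree_elements
    {K : Type} [Field K] [CharZero K] {n α β : ℕ} (hn : 2 ≤ n)
    (hα : 0 < α) (hβ : 0 < β)
    (Γ₀ : Finset (Projectivization K (Fin n → K)))
    (hcard : Γ₀.card = α)
    (hgen : ∀ i, HF (vanishingIdeal (Γ₀ : Set (Projectivization K (Fin n → K)))) i =
      min ((i + n - 1).choose (n - 1)) α)
    (u : Fin β → K) (hu : Function.Injective u)
    (s : ℕ) (hs : α < (s + n - 1).choose (n - 1))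
    (hsmin : ∀ j, α < (j + n - 1).choose (n - 1) → s ≤ j) :
    (∀ f ∈ I1 (vanishingIdeal (Γ₀ : Set (Projectivization K (Fin n → K)))) ⊓ I2 n β u,
      ∀ d, d < s → f.IsHomogeneous d → f ∈ Ideal.span (calA n β u)) ∧
    (∀ f ∈ I1 (vanishingIdeal (Γ₀ : Set (Projectivization K (Fin n → K)))) ⊓ I2 n β u,
      ∀ d, f.IsHomogeneous d → f ∉ Ideal.span (calA n β u) → s ≤ d) :=
  migliore_low_degree_elements_general hn Γ₀ hgen u s hsmin

end PointsMinDist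
end
end
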